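/- The squared 2-Wasserstein distance between two one-dimensional Gaussian distributions N(μ₁, σ₁²) and N(μ₂, σ₂²) equals (μ₁ − μ₂)² + (σ₁ − σ₂)². In particular, for isotropic Gaussians in ℝⁿ, N(m₁, σ₁² I) and N(m₂, σ₂² I), the squared 2-Wasserstein distance equals ‖m₁ − m₂‖² + n(σ₁ − σ₂)². -/

import Mathlib

open MeasureTheory ProbabilityTheory Filter
open scoped NNReal Topology

/-- The 2-Wasserstein distance: infimum over couplings of the square root of the
expected squared distance. -/
noncomputable def W2 {E : Type*} [NormedAddCommGroup E] [MeasurableSpace E]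
    (μ ν : Measure E) : ℝ :=
  sInf {r : ℝ | ∃ γ : Measure (E × E), γ.map Prod.fst = μ ∧ γ.map Prod.snd = ν ∧
    r = (∫ p : E × E, ‖p.1 - p.2‖ ^ 2 ∂γ) ^ ((1 : ℝ) / 2)}

/-- Isotropic Gaussian measure `N(m, v·I)` on `ℝⁿ`, as a product of 1D Gaussians. -/
noncomputable def isoGaussian (n : ℕ) (m : EuclideanSpace ℝ (Fin n)) (v : ℝ≥0) :
    Measure (EuclideanSpace ℝ (Fin n)) :=
  Measure.map (MeasurableEquiv.toLp 2 (Fin n → ℝ))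
    (Measure.pi fun i => gaussianReal (m i) v)

/-!
For any coupling `(X, Y)` of two laws on `ℝ` with finite second moments,
`E (X - Y)² = (E X - E Y)² + Var (X - Y)`, and the Cauchy–Schwarz inequality for the covariance
gives `Var (X - Y) ≥ (sd X - sd Y)²`. For Gaussians this lower bound is attained by the
comonotone coupling `(σ₁ Z + μ₁, σ₂ Z + μ₂)` of a single standard Gaussian `Z`, whose difference
is again Gaussian. For isotropic Gaussians on `ℝⁿ` the squared distance splits into coordinates,
each coordinate of a coupling is a coupling of one-dimensional Gaussians, and applying the
comonotone coupling coordinatewise attains the sum of the one-dimensional bounds.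
-/

open Real

section SecondMoments

variable {Ω : Type*} {mΩ : MeasurableSpace Ω} {P : Measure Ω} {X Y : Ω → ℝ}

lemma covariance_sq_le_variance_mul_variance [IsFiniteMeasure P] (hX : MemLp X 2 P)
    (hY : MemLp Y 2 P) : cov[X, Y; P] ^ 2 ≤ Var[X; P] * Var[Y; P] := by
  have hquad (t : ℝ) : 0 ≤ Var[X; P] * (t * t) + 2 * cov[X, Y; P] * t + Var[Y; P] := by
    have := variance_nonneg (t • X + Y) P
    rw [variance_add (hX.const_smul t) hY, variance_smul, covariance_smul_left] at this
    linarith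
  have := discrim_le_zero hquad
  rw [discrim] at this
  linarith

lemma sq_sqrt_variance_sub_sqrt_variance_le_variance_sub [IsFiniteMeasure P] (hX : MemLp X 2 P)
    (hY : MemLp Y 2 P) : (√Var[X; P] - √Var[Y; P]) ^ 2 ≤ Var[X - Y; P] := by
  have hcov : cov[X, Y; P] ≤ √Var[X; P] * √Var[Y; P] := by
    rw [← sqrt_mul (variance_nonneg X P)]
    exact le_sqrt_of_sq_le (covariance_sq_le_variance_mul_variance hX hY)
  rw [variance_sub hX hY, sub_sq, sq_sqrt (variance_nonneg X P), sq_sqrt (variance_nonneg Y P)]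
  linarith

lemma sq_integral_sub_add_sq_sqrt_variance_sub_le [IsProbabilityMeasure P] (hX : MemLp X 2 P)
    (hY : MemLp Y 2 P) :
    (P[X] - P[Y]) ^ 2 + (√Var[X; P] - √Var[Y; P]) ^ 2 ≤ ∫ ω, (X ω - Y ω) ^ 2 ∂P := by
  have hsecond : ∫ ω, (X ω - Y ω) ^ 2 ∂P = Var[X - Y; P] + (P[X] - P[Y]) ^ 2 := by
    rw [variance_eq_sub (hX.sub hY), integral_sub' (hX.integrable one_le_two)
      (hY.integrable one_le_two)]
    simp only [Pi.pow_apply, Pi.sub_apply, sub_add_cancel]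
  rw [hsecond]
  linarith [sq_sqrt_variance_sub_sqrt_variance_le_variance_sub hX hY]

end SecondMoments

namespace ProbabilityTheory

variable {Ω : Type*} {mΩ : MeasurableSpace Ω} {P : Measure Ω} {X Y Z : Ω → ℝ} {m : ℝ} {v : ℝ≥0}

lemma HasLaw.memLp_two_of_gaussianReal (hX : HasLaw X (gaussianReal m v) P) : MemLp X 2 P := by
  have h := memLp_id_gaussianReal (μ := m) (v := v) 2
  rw [← hX.map_eq] at h
  exact (memLp_map_measure_iff h.1 hX.aemeasurable).1 h

lemma HasLaw.integral_sq_of_gaussianReal (hX : HasLaw X (gaussianReal m v) P) :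
    ∫ ω, X ω ^ 2 ∂P = m ^ 2 + v := by
  have := hX.isProbabilityMeasure
  have h := variance_eq_sub hX.memLp_two_of_gaussianReal
  rw [hX.variance_eq, variance_id_gaussianReal, hX.integral_eq, integral_id_gaussianReal] at h
  simp only [Pi.pow_apply] at h
  linarith

lemma HasLaw.const_mul_add_of_gaussianReal_zero_one (hZ : HasLaw Z (gaussianReal 0 1) P) (c d : ℝ) :
    HasLaw (fun ω ↦ c * Z ω + d) (gaussianReal d (.mk (c ^ 2) (sq_nonneg c))) P := by
  simpa using gaussianReal_add_const (gaussianReal_const_mul hZ c) d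

lemma HasLaw.coe_mul_add_of_gaussianReal_zero_one (hZ : HasLaw Z (gaussianReal 0 1) P)
    (σ : ℝ≥0) (d : ℝ) : HasLaw (fun ω ↦ σ * Z ω + d) (gaussianReal d (σ ^ 2)) P := by
  convert hZ.const_mul_add_of_gaussianReal_zero_one σ d
  ext
  simp

lemma HasLaw.sq_sub_add_sq_sub_le_integral_sq_sub {m₁ m₂ : ℝ} {σ₁ σ₂ : ℝ≥0}
    (hX : HasLaw X (gaussianReal m₁ (σ₁ ^ 2)) P) (hY : HasLaw Y (gaussianReal m₂ (σ₂ ^ 2)) P) :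
    (m₁ - m₂) ^ 2 + ((σ₁ : ℝ) - σ₂) ^ 2 ≤ ∫ ω, (X ω - Y ω) ^ 2 ∂P := by
  have := hX.isProbabilityMeasure
  have h := sq_integral_sub_add_sq_sqrt_variance_sub_le hX.memLp_two_of_gaussianReal
    hY.memLp_two_of_gaussianReal
  have hsd₁ : √Var[X; P] = σ₁ := by
    rw [hX.variance_eq, variance_id_gaussianReal]; simp
  have hsd₂ : √Var[Y; P] = σ₂ := by
    rw [hY.variance_eq, variance_id_gaussianReal]; simp
  rwa [hX.integral_eq, hY.integral_eq, integral_id_gaussianReal, integral_id_gaussianReal, hsd₁,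
    hsd₂] at h

end ProbabilityTheory

section Couplings

variable {E : Type*} [NormedAddCommGroup E] [MeasurableSpace E]

def couplingCosts (μ ν : Measure E) : Set ℝ :=
  {c | ∃ γ : Measure (E × E), γ.map Prod.fst = μ ∧ γ.map Prod.snd = ν ∧
    c = ∫ p : E × E, ‖p.1 - p.2‖ ^ 2 ∂γ}

lemma W2_sq_eq_of_isLeast {μ ν : Measure E} {c : ℝ} (h : IsLeast (couplingCosts μ ν) c) :
    W2 μ ν ^ 2 = c := by
  have hc : 0 ≤ c := by
    obtain ⟨γ, -, -, rfl⟩ := h.1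
    exact integral_nonneg fun _ ↦ sq_nonneg _
  have hW : IsLeast {r : ℝ | ∃ γ : Measure (E × E), γ.map Prod.fst = μ ∧ γ.map Prod.snd = ν ∧
      r = (∫ p : E × E, ‖p.1 - p.2‖ ^ 2 ∂γ) ^ ((1 : ℝ) / 2)} √c := by
    constructor
    · obtain ⟨γ, h₁, h₂, hγ⟩ := h.1
      exact ⟨γ, h₁, h₂, by rw [← hγ, sqrt_eq_rpow]⟩
    · rintro r ⟨γ, h₁, h₂, rfl⟩
      rw [← sqrt_eq_rpow]
      exact sqrt_le_sqrt (h.2 ⟨γ, h₁, h₂, rfl⟩)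
  rw [W2, hW.csInf_eq, sq_sqrt hc]

lemma integral_norm_sub_sq_mem_couplingCosts [OpensMeasurableSpace E] [SecondCountableTopology E]
    {Ω : Type*} {mΩ : MeasurableSpace Ω} {P : Measure Ω} {μ ν : Measure E} {X Y : Ω → E}
    (hX : HasLaw X μ P) (hY : HasLaw Y ν P) :
    ∫ ω, ‖X ω - Y ω‖ ^ 2 ∂P ∈ couplingCosts μ ν := by
  have hXY : AEMeasurable (fun ω ↦ (X ω, Y ω)) P := hX.aemeasurable.prodMk hY.aemeasurable
  refine ⟨P.map fun ω ↦ (X ω, Y ω), ?_, ?_, ?_⟩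
  · rw [AEMeasurable.map_map_of_aemeasurable measurable_fst.aemeasurable hXY]
    exact hX.map_eq
  · rw [AEMeasurable.map_map_of_aemeasurable measurable_snd.aemeasurable hXY]
    exact hY.map_eq
  · rw [integral_map hXY (by fun_prop)]

end Couplings

lemma isLeast_couplingCosts_gaussianReal (μ₁ μ₂ : ℝ) (σ₁ σ₂ : ℝ≥0) :
    IsLeast (couplingCosts (gaussianReal μ₁ (σ₁ ^ 2)) (gaussianReal μ₂ (σ₂ ^ 2)))
      ((μ₁ - μ₂) ^ 2 + ((σ₁ : ℝ) - σ₂) ^ 2) := by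
  constructor
  · have hZ : HasLaw (fun z ↦ z) (gaussianReal 0 1) (gaussianReal 0 1) := HasLaw.id
    convert integral_norm_sub_sq_mem_couplingCosts
      (hZ.coe_mul_add_of_gaussianReal_zero_one σ₁ μ₁)
      (hZ.coe_mul_add_of_gaussianReal_zero_one σ₂ μ₂) using 1
    have hcost :=
      (hZ.const_mul_add_of_gaussianReal_zero_one (σ₁ - σ₂) (μ₁ - μ₂)).integral_sq_of_gaussianReal
    simp only [NNReal.coe_mk] at hcost
    simp only [Real.norm_eq_abs, sq_abs]
    rw [← hcost]
    congr 1 with z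
    ring
  · rintro c ⟨γ, h₁, h₂, rfl⟩
    simp only [Real.norm_eq_abs, sq_abs]
    exact HasLaw.sq_sub_add_sq_sub_le_integral_sq_sub ⟨measurable_fst.aemeasurable, h₁⟩
      ⟨measurable_snd.aemeasurable, h₂⟩

lemma integral_norm_sub_sq_eq_sum {ι Ω : Type*} [Fintype ι] {mΩ : MeasurableSpace Ω}
    {P : Measure Ω} {X Y : Ω → EuclideanSpace ℝ ι}
    (h : ∀ i, Integrable (fun ω ↦ (X ω i - Y ω i) ^ 2) P) :
    ∫ ω, ‖X ω - Y ω‖ ^ 2 ∂P = ∑ i, ∫ ω, (X ω i - Y ω i) ^ 2 ∂P := by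
  simp only [EuclideanSpace.real_norm_sq_eq, PiLp.sub_apply]
  exact integral_finsetSum _ fun i _ ↦ h i

section Isotropic

variable {n : ℕ}

lemma hasLaw_eval_isoGaussian (m : EuclideanSpace ℝ (Fin n)) (v : ℝ≥0) (i : Fin n) :
    HasLaw (fun x : EuclideanSpace ℝ (Fin n) ↦ x i) (gaussianReal (m i) v)
      (isoGaussian n m v) where
  aemeasurable := by fun_prop
  map_eq := by
    rw [isoGaussian, Measure.map_map (by fun_prop) (MeasurableEquiv.measurable _)]
    exact (measurePreserving_eval _ i).map_eq

lemma hasLaw_toLp_mul_add_isoGaussian (m : EuclideanSpace ℝ (Fin n)) (σ : ℝ≥0) :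
    HasLaw (fun z : Fin n → ℝ ↦ WithLp.toLp 2 fun i ↦ σ * z i + m i) (isoGaussian n m (σ ^ 2))
      (Measure.pi fun _ ↦ gaussianReal 0 1) where
  aemeasurable :=
    ((MeasurableEquiv.toLp 2 (Fin n → ℝ)).measurable.comp (by fun_prop)).aemeasurable
  map_eq := by
    have hZ : HasLaw (fun z ↦ z) (gaussianReal 0 1) (gaussianReal 0 1) := HasLaw.id
    have hcoord (i : Fin n) := (hZ.coe_mul_add_of_gaussianReal_zero_one σ (m i)).map_eq
    simp_rw [isoGaussian, ← hcoord]
    rw [← Measure.pi_map_pi fun _ ↦ by fun_prop, Measure.map_map (MeasurableEquiv.measurable _)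
      (by fun_prop)]
    rfl

lemma isLeast_couplingCosts_isoGaussian (m₁ m₂ : EuclideanSpace ℝ (Fin n)) (σ₁ σ₂ : ℝ≥0) :
    IsLeast (couplingCosts (isoGaussian n m₁ (σ₁ ^ 2)) (isoGaussian n m₂ (σ₂ ^ 2)))
      (‖m₁ - m₂‖ ^ 2 + n * ((σ₁ : ℝ) - σ₂) ^ 2) := by
  have hsum : ‖m₁ - m₂‖ ^ 2 + n * ((σ₁ : ℝ) - σ₂) ^ 2
      = ∑ i, ((m₁ i - m₂ i) ^ 2 + ((σ₁ : ℝ) - σ₂) ^ 2) := by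
    simp [EuclideanSpace.real_norm_sq_eq, Finset.sum_add_distrib]
  rw [hsum]
  constructor
  · have hdiff (i : Fin n) : HasLaw (fun z : Fin n → ℝ ↦ (σ₁ - σ₂) * z i + (m₁ i - m₂ i))
        (gaussianReal (m₁ i - m₂ i) (.mk ((σ₁ - σ₂) ^ 2) (sq_nonneg _)))
        (Measure.pi fun _ ↦ gaussianReal 0 1) :=
      HasLaw.const_mul_add_of_gaussianReal_zero_one (Z := fun z : Fin n → ℝ ↦ z i)
        (measurePreserving_eval (fun _ ↦ gaussianReal 0 1) i).hasLaw _ _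
    convert integral_norm_sub_sq_mem_couplingCosts (hasLaw_toLp_mul_add_isoGaussian m₁ σ₁)
      (hasLaw_toLp_mul_add_isoGaussian m₂ σ₂) using 1
    have hcoord_diff (z : Fin n → ℝ) (i : Fin n) :
        (σ₁ * z i + m₁ i) - (σ₂ * z i + m₂ i) = (σ₁ - σ₂) * z i + (m₁ i - m₂ i) := by ring
    rw [integral_norm_sub_sq_eq_sum fun i ↦ by
      simpa only [WithLp.ofLp_toLp, hcoord_diff] using
        (hdiff i).memLp_two_of_gaussianReal.integrable_sq]
    simp only [hcoord_diff, (hdiff _).integral_sq_of_gaussianReal, NNReal.coe_mk]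
  · rintro c ⟨γ, h₁, h₂, rfl⟩
    have hX (i : Fin n) :=
      (hasLaw_eval_isoGaussian m₁ _ i).comp ⟨measurable_fst.aemeasurable, h₁⟩
    have hY (i : Fin n) :=
      (hasLaw_eval_isoGaussian m₂ _ i).comp ⟨measurable_snd.aemeasurable, h₂⟩
    rw [integral_norm_sub_sq_eq_sum fun i ↦
      ((hX i).memLp_two_of_gaussianReal.sub (hY i).memLp_two_of_gaussianReal).integrable_sq]
    exact Finset.sum_le_sum fun i _ ↦ (hX i).sq_sub_add_sq_sub_le_integral_sq_sub (hY i)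

end Isotropic

/-- The squared 2-Wasserstein distance between 1D Gaussians `N(μ₁, σ₁²)` and `N(μ₂, σ₂²)`
equals `(μ₁ − μ₂)² + (σ₁ − σ₂)²`; for isotropic Gaussians on `ℝⁿ` it equals
`‖m₁ − m₂‖² + n (σ₁ − σ₂)²`. -/
theorem stmt_3 (μ₁ μ₂ : ℝ) (σ₁ σ₂ : ℝ≥0) (n : ℕ)
    (m₁ m₂ : EuclideanSpace ℝ (Fin n)) :
    (W2 (gaussianReal μ₁ (σ₁ ^ 2)) (gaussianReal μ₂ (σ₂ ^ 2))) ^ 2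
        = (μ₁ - μ₂) ^ 2 + ((σ₁ : ℝ) - σ₂) ^ 2 ∧
      (W2 (isoGaussian n m₁ (σ₁ ^ 2)) (isoGaussian n m₂ (σ₂ ^ 2))) ^ 2
        = ‖m₁ - m₂‖ ^ 2 + n * ((σ₁ : ℝ) - σ₂) ^ 2 :=
  ⟨W2_sq_eq_of_isLeast (isLeast_couplingCosts_gaussianReal μ₁ μ₂ σ₁ σ₂),
    W2_sq_eq_of_isLeast (isLeast_couplingCosts_isoGaussian m₁ m₂ σ₁ σ₂)⟩
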